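/- Let v = Σ_N c_N φ_N be a nonzero element of H* with only finitely many c_N ≠ 0, and let Z be a rooted forest with c_Z ≠ 0 whose total number of vertices is maximal among all forests N with c_N ≠ 0. Then E_Z v = c_Z φ_∅. -/

import Mathlib

/-!
Cutting a forest splits its vertices between the pruned part `P` and the root part `R`.
If `P ≅ Z` while the forest has at most as many vertices as `Z`, then `R` is empty, which
forces the full cut; then `P` is the whole forest, so only the term `c_Z φ_Z` of `v`
contributes, and it contributes through its unique full cut, whose root part is `∅`.
-/

open scoped Classical

/-- Concrete (labeled) rooted trees: a root with a list of subtrees. -/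
inductive RTree : Type
  | node : List RTree → RTree

/-- Shapes of admissible cuts: at each tree, either the full cut
(everything, including the root, goes to the pruned part `P`), or a choice of
an admissible cut of each child subtree.  A `full` occurring strictly inside
corresponds to cutting the edge above that vertex. -/
inductive CutShape : Type
  | full
  | branch : List CutShape → CutShape

namespace CK

/-- Number of vertices of a forest. -/
def sizeL : List RTree → ℕ
  | [] => 0
  | .node l :: ts => 1 + sizeL l + sizeL ts

/-- All admissible cuts of a forest (a choice of admissible cut of each tree). -/
def cutsF : List RTree → List (List CutShape)
  | [] => [[]]
  | .node l :: ts =>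
      (CutShape.full :: (cutsF l).map CutShape.branch).flatMap
        fun c => (cutsF ts).map (c :: ·)

/-- The root part `R_C(F)` of a cut. -/
def Rcut : List RTree → List CutShape → List RTree
  | [], _ => []
  | _ :: _, [] => []
  | .node _ :: ts, .full :: cs => Rcut ts cs
  | .node l :: ts, .branch ds :: cs => RTree.node (Rcut l ds) :: Rcut ts cs

/-- The pruned part `P_C(F)` of a cut. -/
def Pcut : List RTree → List CutShape → List RTree
  | [], _ => []
  | _ :: _, [] => []
  | .node l :: ts, .full :: cs => RTree.node l :: Pcut ts cs
  | .node l :: ts, .branch ds :: cs => Pcut l ds ++ Pcut ts cs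

/-- Number of `full`s occurring in a cut. -/
def fullsL : List CutShape → ℕ
  | [] => 0
  | .full :: cs => 1 + fullsL cs
  | .branch ds :: cs => fullsL ds + fullsL cs

/-- A list of concrete forests containing (representatives of) every forest
with at most `n` vertices. -/
def forestsUpTo : ℕ → List (List RTree)
  | 0 => [[]]
  | n+1 => [] :: (forestsUpTo n).flatMap fun l => (forestsUpTo n).map fun F => RTree.node l :: F

/-- Isomorphism of rooted trees (non-planar): a root-preserving bijection, i.e.
the lists of subtrees agree up to permutation and isomorphism. -/
inductive Iso : RTree → RTree → Prop
  | node {l₁ l l₂ : List RTree} : List.Forall₂ Iso l₁ l → l.Perm l₂ → Iso (.node l₁) (.node l₂)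

/-- Isomorphism classes of rooted trees. -/
abbrev TreeClass : Type := Quot Iso

/-- Isomorphism classes of rooted forests = multisets of tree classes.
The empty forest is `0`. -/
abbrev ForestClass : Type := Multiset TreeClass

/-- Isomorphism class of a tree. -/
def clT (t : RTree) : TreeClass := Quot.mk _ t

/-- Isomorphism class of a forest. -/
def clF (F : List RTree) : ForestClass := (F.map clT : List TreeClass)

/-- A concrete representative of a forest class. -/
noncomputable def repF (M : ForestClass) : List RTree := M.toList.map Quot.out

/-- A concrete representative of a tree class. -/
noncomputable def repT (T : TreeClass) : RTree := T.out

/-- Number of vertices of a forest class. -/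
noncomputable def sizeC (M : ForestClass) : ℕ := sizeL (repF M)

/-- Number of vertices of a tree class. -/
noncomputable def sizeT (T : TreeClass) : ℕ := sizeL [repT T]

/-- The Hall algebra `H`: finitely supported ℚ-valued functions on
isomorphism classes of rooted forests, with basis the delta functions. -/
abbrev H : Type := ForestClass →₀ ℚ

/-- The basis element `δ_A` of `H`. -/
noncomputable def delta (A : ForestClass) : H := Finsupp.single A 1

/-- `n(A,B;M)`: the number of admissible cuts `C` of `M` with
`P_C(M) ≅ A` and `R_C(M) ≅ B`. -/
noncomputable def nCuts (A B M : ForestClass) : ℕ :=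
  (cutsF (repF M)).countP fun c =>
    decide (clF (Pcut (repF M) c) = A ∧ clF (Rcut (repF M) c) = B)

/-- A finite set of forest classes containing all classes with at most `n`
vertices. -/
noncomputable def forestCand (n : ℕ) : Finset ForestClass :=
  ((forestsUpTo n).map clF).toFinset

/-- A finite set of tree classes containing all classes with at most `n+1`
vertices. -/
noncomputable def treeCand (n : ℕ) : Finset TreeClass :=
  ((forestsUpTo n).map fun F => clT (RTree.node F)).toFinset

/-- The Hall product on basis elements: `δ_A × δ_B = Σ_M n(A,B;M)·δ_M`
(every `M` with `n(A,B;M) ≠ 0` has exactly `sizeC A + sizeC B` vertices). -/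
noncomputable def mulBasis (A B : ForestClass) : H :=
  ∑ M ∈ forestCand (sizeC A + sizeC B), (nCuts A B M : ℚ) • delta M

/-- The Hall product on `H`, extended bilinearly from basis elements. -/
noncomputable def hmul (f g : H) : H :=
  f.sum fun A a => g.sum fun B b => (a * b) • mulBasis A B

/-- The Connes-Kreimer Lie algebra `n_T` (as a vector space): the span of
isomorphism classes of rooted trees. -/
abbrev nT : Type := TreeClass →₀ ℚ

/-- The basis element of `n_T` corresponding to a rooted tree `T`. -/
noncomputable def tau (T : TreeClass) : nT := Finsupp.single T 1

/-- `a(T₁,T₂;T)`: the number of edges `e` of `T` such that the single-edge cut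
at `e` has pruned part `≅ T₁` and root part `≅ T₂`. -/
noncomputable def aCount (T₁ T₂ T : TreeClass) : ℕ :=
  (cutsF [repT T]).countP fun c =>
    decide (fullsL c = 1 ∧ clF (Pcut [repT T] c) = ({T₁} : Multiset TreeClass)
      ∧ clF (Rcut [repT T] c) = ({T₂} : Multiset TreeClass))

/-- The grafting (pre-Lie) product on basis elements:
`T₁ * T₂ = Σ_T a(T₁,T₂;T)·T`. -/
noncomputable def graftBasis (T₁ T₂ : TreeClass) : nT :=
  ∑ T ∈ treeCand (sizeT T₁ + sizeT T₂), (aCount T₁ T₂ T : ℚ) • tau T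

/-- The grafting (pre-Lie) product on `n_T`, extended bilinearly. -/
noncomputable def graft (x y : nT) : nT :=
  x.sum fun T₁ a => y.sum fun T₂ b => (a * b) • graftBasis T₁ T₂

/-- The Connes-Kreimer bracket `[x,y] = x*y - y*x` on `n_T`. -/
noncomputable def ckBracket (x y : nT) : nT := graft x y - graft y x

/-- `Ẽ_A δ_B = Σ_C δ_{R_C(B)}`, the sum over admissible cuts `C` of `B` with
`P_C(B) ≅ A`. -/
noncomputable def elimBasis (A B : ForestClass) : H :=
  (((cutsF (repF B)).filter fun c => decide (clF (Pcut (repF B) c) = A)).map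
    fun c => delta (clF (Rcut (repF B) c))).sum

/-- The elimination operator `E_A` (here on `H ≅ H*`, identifying `φ_B` with
`δ_B`). -/
noncomputable def elim (A : ForestClass) : H →ₗ[ℚ] H :=
  Finsupp.lsum ℚ fun B => LinearMap.toSpanSingleton ℚ H (elimBasis A B)

/-- `Ẽ^top_A δ_B = Σ_C δ_{P_C(B)}`, the sum over admissible cuts `C` of `B`
with `R_C(B) ≅ A`. -/
noncomputable def topElimBasis (A B : ForestClass) : H :=
  (((cutsF (repF B)).filter fun c => decide (clF (Rcut (repF B) c) = A)).map
    fun c => delta (clF (Pcut (repF B) c))).sum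

/-- The top-elimination operator `E^top_A`. -/
noncomputable def topElim (A : ForestClass) : H →ₗ[ℚ] H :=
  Finsupp.lsum ℚ fun B => LinearMap.toSpanSingleton ℚ H (topElimBasis A B)

/-- `H ⊗ H`, realized as finitely supported functions on pairs of classes. -/
abbrev H2 : Type := (ForestClass × ForestClass) →₀ ℚ

/-- `Δ(δ_M) = Σ δ_A ⊗ δ_B`, the sum over ordered pairs `(A,B)` of classes with
`A ⊔ B ≅ M`. -/
noncomputable def deltaBasis (M : ForestClass) : H2 :=
  ∑ A ∈ M.powerset.toFinset, Finsupp.single (A, M - A) 1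

/-- The coproduct `Δ : H → H ⊗ H`. -/
noncomputable def coprod : H →ₗ[ℚ] H2 :=
  Finsupp.lsum ℚ fun M => LinearMap.toSpanSingleton ℚ H2 (deltaBasis M)

lemma sizeL_cons (t : RTree) (ts : List RTree) : sizeL (t :: ts) = sizeL [t] + sizeL ts := by
  cases t
  simp [sizeL]

lemma sizeL_append : ∀ F G : List RTree, sizeL (F ++ G) = sizeL F + sizeL G
  | [], _ => by simp [sizeL]
  | .node l :: ts, G => by simp only [List.cons_append, sizeL, sizeL_append ts G]; omega

lemma sizeL_eq_sum_map : ∀ F : List RTree, sizeL F = (F.map fun t => sizeL [t]).sum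
  | [] => by simp [sizeL]
  | t :: ts => by rw [sizeL_cons, sizeL_eq_sum_map ts, List.map_cons, List.sum_cons]

lemma sizeL_perm {F G : List RTree} (h : F.Perm G) : sizeL F = sizeL G := by
  rw [sizeL_eq_sum_map, sizeL_eq_sum_map, (h.map _).sum_eq]

-- `Iso` is a nested inductive, so the induction is run through its recursor.
lemma sizeL_singleton_eq_of_iso {t u : RTree} (h : Iso t u) : sizeL [t] = sizeL [u] :=
  Iso.rec (motive_1 := fun t u _ => sizeL [t] = sizeL [u])
    (motive_2 := fun F G _ => sizeL F = sizeL G)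
    (fun _ hperm ih => by simp [sizeL, ih, sizeL_perm hperm])
    rfl
    (fun {_ _ _ l₂} _ _ ih ihs => by rw [sizeL_cons, sizeL_cons _ l₂, ih, ihs]) h

noncomputable def treeClassSize : TreeClass → ℕ :=
  Quot.lift (fun t => sizeL [t]) fun _ _ => sizeL_singleton_eq_of_iso

lemma sizeL_eq_sum_treeClassSize : ∀ F : List RTree, sizeL F = ((clF F).map treeClassSize).sum
  | [] => by simp [sizeL, clF]
  | t :: ts => by
    rw [sizeL_cons, sizeL_eq_sum_treeClassSize ts]
    simp [clF, clT, treeClassSize]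

lemma clF_repF (M : ForestClass) : clF (repF M) = M := by
  simp [clF, repF, clT, Function.comp_def, Quot.out_eq]

lemma sizeC_clF (F : List RTree) : sizeC (clF F) = sizeL F := by
  rw [sizeC, sizeL_eq_sum_treeClassSize, clF_repF, ← sizeL_eq_sum_treeClassSize]

lemma mem_cutsF_cons {l ts : List RTree} {c : List CutShape} :
    c ∈ cutsF (.node l :: ts) ↔
      ∃ c₀ cs, c = c₀ :: cs ∧ cs ∈ cutsF ts ∧
        (c₀ = .full ∨ ∃ ds ∈ cutsF l, c₀ = .branch ds) := by
  simp only [cutsF, List.mem_flatMap, List.mem_cons, List.mem_map]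
  constructor
  · rintro ⟨c₀, hc₀, cs, hcs, rfl⟩
    exact ⟨c₀, cs, rfl, hcs, by rcases hc₀ with rfl | ⟨ds, hds, rfl⟩ <;> tauto⟩
  · rintro ⟨c₀, cs, rfl, hcs, rfl | ⟨ds, hds, rfl⟩⟩
    · exact ⟨.full, Or.inl rfl, cs, hcs, rfl⟩
    · exact ⟨.branch ds, Or.inr ⟨ds, hds, rfl⟩, cs, hcs, rfl⟩

theorem nodup_cutsF : ∀ F : List RTree, (cutsF F).Nodup
  | [] => by simp [cutsF]
  | .node l :: ts => by
    rw [cutsF]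
    have hheads : (CutShape.full :: (cutsF l).map .branch).Nodup :=
      List.nodup_cons.mpr ⟨by simp, (nodup_cutsF l).map fun _ _ h => by injection h⟩
    refine List.nodup_flatMap.mpr ⟨fun _ _ => (nodup_cutsF ts).map List.cons_injective, ?_⟩
    refine hheads.imp fun hne => List.disjoint_left.mpr fun _ hc hc' => ?_
    obtain ⟨_, -, rfl⟩ := List.mem_map.mp hc
    obtain ⟨_, -, h⟩ := List.mem_map.mp hc'
    exact hne (List.cons.inj h).1.symm

theorem sizeL_Pcut_add_sizeL_Rcut : ∀ {F : List RTree} {c : List CutShape}, c ∈ cutsF F →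
    sizeL (Pcut F c) + sizeL (Rcut F c) = sizeL F
  | [], _, _ => by simp [Pcut, Rcut, sizeL]
  | .node l :: ts, c, hc => by
    rcases mem_cutsF_cons.mp hc with ⟨c₀, cs, rfl, hcs, rfl | ⟨ds, hds, rfl⟩⟩
    · have := sizeL_Pcut_add_sizeL_Rcut hcs
      simp only [Pcut, Rcut, sizeL]
      omega
    · have := sizeL_Pcut_add_sizeL_Rcut hds
      have := sizeL_Pcut_add_sizeL_Rcut hcs
      simp only [Pcut, Rcut, sizeL, sizeL_append]
      omega

def fullCut (F : List RTree) : List CutShape := List.replicate F.length .full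

lemma fullCut_cons (t : RTree) (ts : List RTree) : fullCut (t :: ts) = .full :: fullCut ts := rfl

lemma fullCut_mem_cutsF : ∀ F : List RTree, fullCut F ∈ cutsF F
  | [] => by simp [cutsF, fullCut]
  | .node _ :: ts =>
    mem_cutsF_cons.mpr ⟨_, _, fullCut_cons _ _, fullCut_mem_cutsF ts, Or.inl rfl⟩

@[simp] lemma Pcut_fullCut : ∀ F : List RTree, Pcut F (fullCut F) = F
  | [] => by simp [Pcut]
  | .node _ :: ts => by rw [fullCut_cons, Pcut, Pcut_fullCut ts]

@[simp] lemma Rcut_fullCut : ∀ F : List RTree, Rcut F (fullCut F) = []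
  | [] => by simp [Rcut]
  | .node _ :: ts => by rw [fullCut_cons, Rcut, Rcut_fullCut ts]

theorem eq_fullCut_of_sizeL_Rcut_eq_zero : ∀ {F : List RTree} {c : List CutShape},
    c ∈ cutsF F → sizeL (Rcut F c) = 0 → c = fullCut F
  | [], c, hc, _ => by simpa [cutsF, fullCut] using hc
  | .node l :: ts, c, hc, h => by
    rcases mem_cutsF_cons.mp hc with ⟨c₀, cs, rfl, hcs, rfl | ⟨ds, -, rfl⟩⟩
    · rw [Rcut] at h
      rw [fullCut_cons, eq_fullCut_of_sizeL_Rcut_eq_zero hcs h]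
    · simp [Rcut, sizeL] at h

theorem eq_fullCut_of_sizeL_le_sizeL_Pcut {F : List RTree} {c : List CutShape}
    (hc : c ∈ cutsF F) (h : sizeL F ≤ sizeL (Pcut F c)) : c = fullCut F :=
  eq_fullCut_of_sizeL_Rcut_eq_zero hc (by have := sizeL_Pcut_add_sizeL_Rcut hc; omega)

theorem elimBasis_of_sizeC_le {A B : ForestClass} (h : sizeC B ≤ sizeC A) :
    elimBasis A B = if B = A then delta 0 else 0 := by
  set F := repF B
  have key : ∀ c ∈ cutsF F, clF (Pcut F c) = A ↔ c = fullCut F ∧ B = A := by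
    intro c hc
    constructor
    · intro hP
      have hfull : c = fullCut F := eq_fullCut_of_sizeL_le_sizeL_Pcut hc <| by
        rwa [← sizeC_clF, ← sizeC_clF, hP, clF_repF]
      refine ⟨hfull, ?_⟩
      rw [← hP, hfull, Pcut_fullCut, clF_repF]
    · rintro ⟨rfl, rfl⟩
      rw [Pcut_fullCut, clF_repF]
  rw [elimBasis, List.filter_congr fun c hc => by rw [decide_eq_decide.mpr (key c hc)]]
  split_ifs with hBA
  · have hfilter : (cutsF F).filter (fun c => decide (c = fullCut F ∧ B = A)) = [fullCut F] := by
      simp only [hBA, and_true]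
      rw [List.filter_eq, List.count_eq_one_of_mem (nodup_cutsF F) (fullCut_mem_cutsF F)]
      rfl
    rw [hfilter]
    simp [F, clF]
  · simp [hBA]

lemma elim_apply (A : ForestClass) (v : H) : elim A v = v.sum fun B b => b • elimBasis A B :=
  rfl

theorem elim_maximal_term_general (v : H) (Z : ForestClass)
    (hmax : ∀ N ∈ v.support, sizeC N ≤ sizeC Z) :
    elim Z v = v Z • delta 0 := by
  rw [elim_apply, Finsupp.sum, Finset.sum_eq_single Z]
  · rw [elimBasis_of_sizeC_le le_rfl, if_pos rfl]
  · intro B hB hBZ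
    rw [elimBasis_of_sizeC_le (hmax B hB), if_neg hBZ, smul_zero]
  · intro hZ
    rw [Finsupp.notMem_support_iff.mp hZ, zero_smul]

/-- STATEMENT 14: if `v = Σ_N c_N φ_N` is a nonzero finitely supported element
of `H*` and `Z` is a forest with `c_Z ≠ 0` whose number of vertices is maximal
among the forests in the support of `v`, then `E_Z v = c_Z·φ_∅`. -/
theorem elim_maximal_term (v : H) (hv : v ≠ 0) (Z : ForestClass)
    (hZ : Z ∈ v.support)
    (hmax : ∀ N ∈ v.support, sizeC N ≤ sizeC Z) :
    elim Z v = v Z • delta 0 :=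
  elim_maximal_term_general v Z hmax

end CK
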